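/- In the pre-Lie algebra B_b with product e_i ∘ e_j = (i/(1 + b·j))e_{i+j} (b not the inverse of a nonzero integer), the rescaled basis ē_i = (1 + b·i)e_i satisfies ē_i ∘ ē_j = (i(1 + b·i)/(1 + b(i+j)))·ē_{i+j}, and the associated Lie bracket satisfies [ē_i, ē_j] = (i - j)ē_{i+j}, i.e., the associated Lie algebra is the Witt algebra. -/

import Mathlib

/-- The bilinear product on `E = ⊕_{i∈ℤ} ℂ e_i` determined on basis elements by
`e_i ∘ e_j = c i j • e_{i+j}`. -/
noncomputable def gradedProd (c : ℤ → ℤ → ℂ) (x y : ℤ →₀ ℂ) : ℤ →₀ ℂ :=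
  x.sum fun i xi => y.sum fun j yj => Finsupp.single (i + j) (xi * yj * c i j)

/-- The product of the pre-Lie algebra `B_b`: `e_i ∘ e_j = (i/(1 + b j)) e_{i+j}`. -/
noncomputable def mulB (b : ℂ) (x y : ℤ →₀ ℂ) : ℤ →₀ ℂ :=
  gradedProd (fun i j => (i : ℂ) / (1 + b * j)) x y

/-- The rescaled basis `ē_i = (1 + b i) e_i`. -/
noncomputable def ebar (b : ℂ) (i : ℤ) : ℤ →₀ ℂ := Finsupp.single i (1 + b * i)

lemma one_add_mul_intCast_ne_zero {K : Type*} [Field K] {b : K}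
    (hb : ∀ n : ℤ, n ≠ 0 → b ≠ (n : K)⁻¹) (k : ℤ) : 1 + b * k ≠ 0 := by
  intro h
  have hk : k ≠ 0 := by rintro rfl; simp at h
  refine hb (-k) (neg_ne_zero.mpr hk) (eq_inv_of_mul_eq_one_left ?_)
  push_cast
  linear_combination -h

lemma gradedProd_single_single (c : ℤ → ℤ → ℂ) (i j : ℤ) (x y : ℂ) :
    gradedProd c (Finsupp.single i x) (Finsupp.single j y)
      = Finsupp.single (i + j) (x * y * c i j) := by
  rw [gradedProd, Finsupp.sum_single_index (by simp), Finsupp.sum_single_index (by simp)]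

/-- The factor `1 + b j` of `ē_j` cancels the denominator of `e_i ∘ e_j`, so both claims
reduce to the coefficient `i (1 + b i)`. -/
lemma mulB_ebar_ebar {b : ℂ} (hb : ∀ n : ℤ, n ≠ 0 → b ≠ (n : ℂ)⁻¹) (i j : ℤ) :
    mulB b (ebar b i) (ebar b j) = Finsupp.single (i + j) ((i : ℂ) * (1 + b * i)) := by
  have hj := one_add_mul_intCast_ne_zero hb j
  rw [mulB, ebar, ebar, gradedProd_single_single]
  congr 1
  field_simp

/-- In `B_b`, the rescaled basis `ē_i = (1 + b i) e_i` satisfies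
`ē_i ∘ ē_j = (i (1 + b i)/(1 + b (i+j))) ē_{i+j}`, and the associated Lie bracket
satisfies `[ē_i, ē_j] = (i - j) ē_{i+j}` (the Witt algebra). -/
theorem Bb_bracket_witt (b : ℂ) (hb : ∀ n : ℤ, n ≠ 0 → b ≠ (n : ℂ)⁻¹) :
    (∀ i j : ℤ,
      mulB b (ebar b i) (ebar b j)
        = ((i : ℂ) * (1 + b * i) / (1 + b * (i + j))) • ebar b (i + j)) ∧
    (∀ i j : ℤ,
      mulB b (ebar b i) (ebar b j) - mulB b (ebar b j) (ebar b i)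
        = ((i : ℂ) - j) • ebar b (i + j)) := by
  refine ⟨fun i j => ?_, fun i j => ?_⟩
  · have hij := one_add_mul_intCast_ne_zero hb (i + j)
    push_cast at hij
    rw [mulB_ebar_ebar hb, ebar, Finsupp.smul_single, smul_eq_mul]
    congr 1
    push_cast
    field_simp
  · rw [mulB_ebar_ebar hb, mulB_ebar_ebar hb, add_comm j i, ebar, Finsupp.smul_single,
      ← Finsupp.single_sub, smul_eq_mul]
    congr 1
    push_cast
    ring
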